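/- Set f0 := x, f1 := yw²−ty+1, f2 := x+z. For each i ∈ {0,1,2}, if αi = 0 then fi is an invariant divisor of the D4^(3) system: the total derivative of fi along the Hamiltonian vector field, namely ∂fi/∂t + (∂H/∂y)(∂fi/∂x) − (∂H/∂x)(∂fi/∂y) + (∂H/∂w)(∂fi/∂z) − (∂H/∂z)(∂fi/∂w), is divisible by fi in the polynomial ring ℂ(t)[x,y,z,w]. -/

import Mathlib

/- STATEMENT 15: invariant divisors of the D4^(3) system.  For each i ∈ {0,1,2},
if αi = 0 then the total derivative of fi along the Hamiltonian vector field is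
divisible by fi.  Divisibility in ℂ(t)[x,y,z,w] is formalized as the existence
of a cofactor g with D fi = fi * g pointwise for all t with
(4t+3)(16t²−12t+9) ≠ 0 and all x,y,z,w. -/

open Complex

noncomputable def HD4 (a0 a1 a2 : ℂ) (t x y z w : ℂ) : ℂ :=
  (-(12*t*x^2*y^4) + 12*(x + 2*a0*t)*x*y^3
    + 3*((a0 + 14*a1 + 9*a2)*x - 4*a0^2*t)*y^2
    + (-(24*t*x^2) - 32*t^2*x - 3*a0*(5*a0 + 14*a1 + 9*a2))*y
    + 24*x*(x + (4*a0 + 7*a1 + 4*a2)*t)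
    - 12*t*z^2*w^4 - 12*(z - 2*(a0+a2)*t)*z*w^3
    + 3*(8*t^2*z^2 - (a0 + 6*a1 - 3*a2)*z - 4*(a0+a2)^2*t)*w^2
    + (12*t*z^2 - 8*(7*a0 + 8*a1 + 7*a2)*t^2*z + 3*(5 - 6*a1 - 8*a1^2 - 4*a2))*w
    - 3*((4*t^3 + 1)*z + (19*a0 + 10*a1 + 7*a2)*t)*z
    - 12*x*(-(4*t*x*w*y^3) + (4*x*w + 4*t*x*w^2 - 2*t*z*w^2 + z*w + 2*t^2*z)*y^2
        + (-(2*x*w^2) - 7*t*z - 4*t^2*z*w + z*w^2 + 4*t*z*w^3)*y + (8*t*w + 5)*z)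
    + 24*a0^2*t*y*w
    + 12*a1*x*w*(2*w - 7*y) + 6*a2*x*y*w*(4*t*(2*w - y) - 3)
    + 6*a0*y*(4*t*(2*x - z)*w^2 + (x - 12*t*x*y + 2*z)*w + 4*t^2*z)
    + 24*a0*a2*t*y*w) / ((4*t + 3)*(16*t^2 - 12*t + 9))

noncomputable def pdX (H : ℂ → ℂ → ℂ → ℂ → ℂ → ℂ) (t x y z w : ℂ) : ℂ :=
  deriv (fun s => H t s y z w) x

noncomputable def pdY (H : ℂ → ℂ → ℂ → ℂ → ℂ → ℂ) (t x y z w : ℂ) : ℂ :=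
  deriv (fun s => H t x s z w) y

noncomputable def pdZ (H : ℂ → ℂ → ℂ → ℂ → ℂ → ℂ) (t x y z w : ℂ) : ℂ :=
  deriv (fun s => H t x y s w) z

noncomputable def pdW (H : ℂ → ℂ → ℂ → ℂ → ℂ → ℂ) (t x y z w : ℂ) : ℂ :=
  deriv (fun s => H t x y z s) w

noncomputable def pdT (f : ℂ → ℂ → ℂ → ℂ → ℂ → ℂ) (t x y z w : ℂ) : ℂ :=
  deriv (fun s => f s x y z w) t

/-- Total derivative of `f` along the Hamiltonian vector field of `H`. -/
noncomputable def totalDeriv (H f : ℂ → ℂ → ℂ → ℂ → ℂ → ℂ) (t x y z w : ℂ) : ℂ :=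
  pdT f t x y z w
  + pdY H t x y z w * pdX f t x y z w
  - pdX H t x y z w * pdY f t x y z w
  + pdW H t x y z w * pdZ f t x y z w
  - pdZ H t x y z w * pdW f t x y z w

/- Only a few partial derivatives of `H` enter the total derivative of each `fᵢ`:
`D x = H_y`, `D (x + z) = H_y + H_w` and
`D (y w² - t y + 1) = -y - (w² - t) H_x - 2 y w H_z`.
These partials are explicit polynomials over the common denominator `(4t+3)(16t²-12t+9)`,
and after the specialisation `αᵢ = 0` (with `α₀ + 2α₁ + α₂ = 1` eliminating one more
parameter) the resulting numerator is a polynomial multiple of `fᵢ`; the cofactors come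
from polynomial division. -/

local notation "den" t:max => (4*t + 3)*(16*t^2 - 12*t + 9)

section TotalDeriv

variable (H : ℂ → ℂ → ℂ → ℂ → ℂ → ℂ) (t x y z w : ℂ)

theorem totalDeriv_x : totalDeriv H (fun _ x _ _ _ => x) t x y z w = pdY H t x y z w := by
  simp [totalDeriv, pdT, pdX, pdY, pdZ, pdW]

theorem totalDeriv_x_add_z :
    totalDeriv H (fun _ x _ z _ => x + z) t x y z w = pdY H t x y z w + pdW H t x y z w := by
  simp [totalDeriv, pdT, pdX, pdY, pdZ, pdW]

theorem totalDeriv_y_mul_w_sq_sub_t_mul_y_add_one :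
    totalDeriv H (fun t _ y _ w => y*w^2 - t*y + 1) t x y z w
      = -y - (w^2 - t) * pdX H t x y z w - 2*y*w * pdZ H t x y z w := by
  simp (disch := fun_prop) only [totalDeriv, pdT, pdX, pdY, pdZ, pdW, deriv_fun_add, deriv_fun_sub,
    deriv_fun_mul, deriv_fun_pow, deriv_const, deriv_id'', deriv_const_mul_id]
  ring

end TotalDeriv

section PartialDerivs

-- Each right-hand side differentiates the numerator of `HD4` term by term, in the same order.

variable (a0 a1 a2 t x y z w : ℂ)

theorem pdX_HD4 :
    pdX (HD4 a0 a1 a2) t x y z w =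
      (-(24*t*x*y^4) + 24*(x + a0*t)*y^3 + 3*(a0 + 14*a1 + 9*a2)*y^2
        - (48*t*x + 32*t^2)*y + 24*(2*x + (4*a0 + 7*a1 + 4*a2)*t)
        - 12*(-(8*t*x*w*y^3) + (8*x*w + 8*t*x*w^2 - 2*t*z*w^2 + z*w + 2*t^2*z)*y^2
            + (-(4*x*w^2) - 7*t*z - 4*t^2*z*w + z*w^2 + 4*t*z*w^3)*y + (8*t*w + 5)*z)
        + 12*a1*w*(2*w - 7*y) + 6*a2*y*w*(4*t*(2*w - y) - 3)
        + 6*a0*y*(8*t*w^2 + (1 - 12*t*y)*w)) / den t := by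
  simp only [pdX, HD4, deriv_div_const]
  simp (disch := fun_prop) only [deriv_fun_add, deriv_fun_sub, deriv_fun_mul, deriv.fun_neg,
    deriv_fun_pow, deriv_const, deriv_id'', deriv_const_mul_id]
  ring

theorem pdY_HD4 :
    pdY (HD4 a0 a1 a2) t x y z w =
      (-(48*t*x^2*y^3) + 36*(x + 2*a0*t)*x*y^2 + 6*((a0 + 14*a1 + 9*a2)*x - 4*a0^2*t)*y
        - 24*t*x^2 - 32*t^2*x - 3*a0*(5*a0 + 14*a1 + 9*a2)
        - 12*x*(-(12*t*x*w*y^2) + 2*(4*x*w + 4*t*x*w^2 - 2*t*z*w^2 + z*w + 2*t^2*z)*y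
            + (-(2*x*w^2) - 7*t*z - 4*t^2*z*w + z*w^2 + 4*t*z*w^3))
        + 24*a0^2*t*w - 84*a1*x*w + 6*a2*x*w*(4*t*(2*w - 2*y) - 3)
        + 6*a0*(4*t*(2*x - z)*w^2 + (x - 24*t*x*y + 2*z)*w + 4*t^2*z)
        + 24*a0*a2*t*w) / den t := by
  simp only [pdY, HD4, deriv_div_const]
  simp (disch := fun_prop) only [deriv_fun_add, deriv_fun_sub, deriv_fun_mul, deriv.fun_neg,
    deriv_fun_pow, deriv_const, deriv_id'', deriv_const_mul_id, deriv_const_sub_id]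
  ring

theorem pdZ_HD4 :
    pdZ (HD4 a0 a1 a2) t x y z w =
      (-(24*t*z*w^4) - 12*(2*z - 2*(a0 + a2)*t)*w^3 + 3*(16*t^2*z - (a0 + 6*a1 - 3*a2))*w^2
        + (24*t*z - 8*(7*a0 + 8*a1 + 7*a2)*t^2)*w
        - 3*(2*(4*t^3 + 1)*z + (19*a0 + 10*a1 + 7*a2)*t)
        - 12*x*((-(2*t*w^2) + w + 2*t^2)*y^2 + (-(7*t) - 4*t^2*w + w^2 + 4*t*w^3)*y + 8*t*w + 5)
        + 6*a0*y*(-(4*t*w^2) + 2*w + 4*t^2)) / den t := by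
  simp only [pdZ, HD4, deriv_div_const]
  simp (disch := fun_prop) only [deriv_fun_add, deriv_fun_sub, deriv_fun_mul, deriv.fun_neg,
    deriv_fun_pow, deriv_const, deriv_id'', deriv_const_mul_id, deriv_const_sub_id]
  ring

theorem pdW_HD4 :
    pdW (HD4 a0 a1 a2) t x y z w =
      (-(48*t*z^2*w^3) - 36*(z - 2*(a0 + a2)*t)*z*w^2
        + 6*(8*t^2*z^2 - (a0 + 6*a1 - 3*a2)*z - 4*(a0 + a2)^2*t)*w
        + 12*t*z^2 - 8*(7*a0 + 8*a1 + 7*a2)*t^2*z + 3*(5 - 6*a1 - 8*a1^2 - 4*a2)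
        - 12*x*(-(4*t*x*y^3) + (4*x + 8*t*x*w - 4*t*z*w + z)*y^2
            + (-(4*x*w) - 4*t^2*z + 2*z*w + 12*t*z*w^2)*y + 8*t*z)
        + 24*a0^2*t*y + 12*a1*x*(4*w - 7*y) + 6*a2*x*y*(4*t*(4*w - y) - 3)
        + 6*a0*y*(8*t*(2*x - z)*w + x - 12*t*x*y + 2*z) + 24*a0*a2*t*y) / den t := by
  simp only [pdW, HD4, deriv_div_const]
  simp (disch := fun_prop) only [deriv_fun_add, deriv_fun_sub, deriv_fun_mul, deriv.fun_neg,
    deriv_fun_pow, deriv_const, deriv_id'', deriv_const_mul_id]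
  ring

end PartialDerivs

section Cofactors

variable (a0 a1 a2 t x y z w : ℂ)

/-- `H_y` with the factor `x` removed, at `α₀ = 0`. -/
noncomputable def cofactor₀ : ℂ :=
  (-(48*t*x*y^3) + 36*x*y^2 + 6*(14*a1 + 9*a2)*y - 24*t*x - 32*t^2
    - 12*(-(12*t*x*w*y^2) + 2*(4*x*w + 4*t*x*w^2 - 2*t*z*w^2 + z*w + 2*t^2*z)*y
        + (-(2*x*w^2) - 7*t*z - 4*t^2*z*w + z*w^2 + 4*t*z*w^3))
    - 84*a1*w + 6*a2*w*(4*t*(2*w - 2*y) - 3)) / den t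

noncomputable def cofactor₁ : ℂ :=
  (-(27*y) + 60*z*w^2 + 12*y*z*w - 48*x*w^2 + 120*x*y*w - 96*t*w^2 - 60*t*z + 96*t*z*w^3
    + 24*t*y*w - 24*t*y*z*w^2 + 48*t*x + 192*t*x*y*w^2 - 144*t*x*y^2*w + 24*t*x*y^3
    + 96*t^2 - 96*t^2*z*w + 24*t^2*y*z + 96*a0*t*y*w - 24*a0*t*y^2) / den t

noncomputable def cofactor₂ : ℂ :=
  (6*w + 12*y - 36*z*w^2 + 24*x*w^2 - 48*x*y*w - 12*x*y^2 + 48*t*w^2 + 12*t*z - 48*t*z*w^3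
    - 48*t*y*w - 24*t*x - 96*t*x*y*w^2 + 48*t*x*y^2*w - 32*t^2 + 48*t^2*z*w
    - 48*a1*w - 24*a1*y - 96*a1*t*w^2 + 96*a1*t*y*w) / den t

theorem totalDeriv_HD4_x_eq_mul_cofactor₀ :
    totalDeriv (HD4 0 a1 a2) (fun _ x _ _ _ => x) t x y z w = x * cofactor₀ a1 a2 t x y z w := by
  rw [totalDeriv_x, pdY_HD4, cofactor₀]
  ring

theorem totalDeriv_HD4_y_mul_w_sq_sub_t_mul_y_add_one_eq_mul_cofactor₁ (hden : den t ≠ 0) :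
    totalDeriv (HD4 a0 0 (1 - a0)) (fun t _ y _ w => y*w^2 - t*y + 1) t x y z w
      = (y*w^2 - t*y + 1) * cofactor₁ a0 t x y z w := by
  rw [totalDeriv_y_mul_w_sq_sub_t_mul_y_add_one, pdX_HD4, pdZ_HD4, cofactor₁]
  linear_combination y * mul_inv_cancel₀ hden

theorem totalDeriv_HD4_x_add_z_eq_mul_cofactor₂ :
    totalDeriv (HD4 (1 - 2*a1) a1 0) (fun _ x _ z _ => x + z) t x y z w
      = (x + z) * cofactor₂ a1 t x y z w := by
  rw [totalDeriv_x_add_z, pdY_HD4, pdW_HD4, cofactor₂]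
  ring

end Cofactors

theorem invariant_divisors_D4 (a0 a1 a2 : ℂ)
    (hrel : a0 + 2*a1 + a2 = 1) :
    -- f0 = x
    (a0 = 0 → ∃ g : ℂ → ℂ → ℂ → ℂ → ℂ → ℂ, ∀ t x y z w : ℂ,
      (4*t + 3)*(16*t^2 - 12*t + 9) ≠ 0 →
      totalDeriv (HD4 a0 a1 a2) (fun _ x _ _ _ => x) t x y z w
        = x * g t x y z w) ∧
    -- f1 = yw² - ty + 1
    (a1 = 0 → ∃ g : ℂ → ℂ → ℂ → ℂ → ℂ → ℂ, ∀ t x y z w : ℂ,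
      (4*t + 3)*(16*t^2 - 12*t + 9) ≠ 0 →
      totalDeriv (HD4 a0 a1 a2) (fun t _ y _ w => y*w^2 - t*y + 1) t x y z w
        = (y*w^2 - t*y + 1) * g t x y z w) ∧
    -- f2 = x + z
    (a2 = 0 → ∃ g : ℂ → ℂ → ℂ → ℂ → ℂ → ℂ, ∀ t x y z w : ℂ,
      (4*t + 3)*(16*t^2 - 12*t + 9) ≠ 0 →
      totalDeriv (HD4 a0 a1 a2) (fun _ x _ z _ => x + z) t x y z w
        = (x + z) * g t x y z w) := by
  refine ⟨fun h0 => ?_, fun h1 => ?_, fun h2 => ?_⟩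
  · subst h0
    exact ⟨cofactor₀ a1 a2, fun t x y z w _ =>
      totalDeriv_HD4_x_eq_mul_cofactor₀ a1 a2 t x y z w⟩
  · subst h1
    obtain rfl : a2 = 1 - a0 := by linear_combination hrel
    exact ⟨cofactor₁ a0, fun t x y z w =>
      totalDeriv_HD4_y_mul_w_sq_sub_t_mul_y_add_one_eq_mul_cofactor₁ a0 t x y z w⟩
  · subst h2
    obtain rfl : a0 = 1 - 2*a1 := by linear_combination hrel
    exact ⟨cofactor₂ a1, fun t x y z w _ =>
      totalDeriv_HD4_x_add_z_eq_mul_cofactor₂ a1 t x y z w⟩
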